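/- arXiv:1801.08371 — 6 statements merged into one kernel-verified Lean document; each statement's English description precedes it below -/
import Mathlib

section
/- Let N ≥ 1 and let L be a positive operator on the N-partite Hilbert space H. Suppose the family of unit vectors a = (a_0, …, a_{N-1}) maximizes the expectation value ⟨P(b), L P(b)⟩ over all families b of unit vectors, and set Ψ = L P(a) and g = ⟨P(a), L P(a)⟩. Then g² = Σ_{k} |⟨P(a)[N-1 ↦ e_k], Ψ⟩|², where P(a)[N-1 ↦ e_k] denotes the product vector obtained from a by replacing its last component a_{N-1} with the k-th standard basis vector e_k of the last factor, and the sum runs over all k. Equivalently, g = √(⟨P(a₀,…,a_{N-2}), L' P(a₀,…,a_{N-2})⟩) where L' is the partial trace of |Ψ⟩⟨Ψ| over the last subsystem. (Theorem 1, Forward iteration.) -/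
open scoped ComplexInnerProductSpace

/-- The product vector `P(a)` of a family of vectors, `P(a) i = ∏ j, a j (i j)`. -/
noncomputable def prodVec {N : ℕ} {d : Fin N → ℕ}
    (a : (j : Fin N) → EuclideanSpace ℂ (Fin (d j))) :
    EuclideanSpace ℂ ((j : Fin N) → Fin (d j)) :=
  WithLp.toLp 2 (fun i => ∏ j, a j (i j))

/-!
If `a` maximizes `⟨P(b), L P(b)⟩` over unit product vectors, then in particular its last
factor `a_last` maximizes the Rayleigh quotient of the compression `T† L T` of `L` by the
embedding `T v = P(a[last ↦ v])`. Hence `a_last` is an eigenvector of `T† L T` with eigenvalue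
`g`, that is `T† Ψ = g • a_last`, and Parseval's identity for `T† Ψ` in the standard basis
gives `∑ₖ |⟨T eₖ, Ψ⟩|² = ‖T† Ψ‖² = g²`.
-/

open Function ContinuousLinearMap
open scoped InnerProduct

section Compression

variable {𝕜 E F : Type*} [RCLike 𝕜]
  [NormedAddCommGroup E] [InnerProductSpace 𝕜 E] [CompleteSpace E]
  [NormedAddCommGroup F] [InnerProductSpace 𝕜 F] [CompleteSpace F]

theorem adjoint_apply_apply_eq_smul_of_isMaxOn_unit_sphere (T : E →L[𝕜] F) {L : F →L[𝕜] F}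
    (hL : IsSelfAdjoint L) {x : E} (hx : ‖x‖ = 1)
    (hmax : ∀ y : E, ‖y‖ = 1 →
      RCLike.re (inner 𝕜 (T y) (L (T y))) ≤ RCLike.re (inner 𝕜 (T x) (L (T x)))) :
    (T†) (L (T x)) = (RCLike.re (inner 𝕜 (T x) (L (T x))) : 𝕜) • x := by
  have hquad : ∀ y : E,
      (T† ∘L L ∘L T).reApplyInnerSelf y = RCLike.re (inner 𝕜 (T y) (L (T y))) := fun y => by
      rw [reApplyInnerSelf_apply, ContinuousLinearMap.comp_apply, ContinuousLinearMap.comp_apply,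
        adjoint_inner_left, inner_re_symm]
  have hextr : IsMaxOn (T† ∘L L ∘L T).reApplyInnerSelf (Metric.sphere 0 ‖x‖) x := fun y hy => by
    rw [mem_sphere_zero_iff_norm, hx] at hy
    simpa only [Set.mem_ofPred_eq, hquad] using hmax y hy
  have := (hL.adjoint_conj T).eq_smul_self_of_isLocalExtrOn (Or.inr hextr.localize)
  rwa [rayleighQuotient, hquad, hx, one_pow, div_one] at this

end Compression

section ProductVectors

variable {n : ℕ} {d : Fin n → ℕ}

theorem prodVec_update_apply (a : (j : Fin n) → EuclideanSpace ℂ (Fin (d j))) (j : Fin n)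
    (v : EuclideanSpace ℂ (Fin (d j))) (i : (j : Fin n) → Fin (d j)) :
    prodVec (update a j v) i = v (i j) * ∏ k ∈ Finset.univ \ {j}, a k (i k) := by
  change ∏ k, update a j v k (i k) = _
  simp only [apply_update (fun k (w : EuclideanSpace ℂ (Fin (d k))) => w (i k))]
  exact Finset.prod_update_of_mem (Finset.mem_univ j) _ _

noncomputable def prodVecUpdateCLM (a : (j : Fin n) → EuclideanSpace ℂ (Fin (d j))) (j : Fin n) :
    EuclideanSpace ℂ (Fin (d j)) →L[ℂ] EuclideanSpace ℂ ((j : Fin n) → Fin (d j)) :=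
  LinearMap.toContinuousLinearMap
    { toFun := fun v => prodVec (update a j v)
      map_add' := fun v w => by ext i; simp only [PiLp.add_apply, prodVec_update_apply]; ring
      map_smul' := fun c v => by
        ext i; simp only [PiLp.smul_apply, prodVec_update_apply, smul_eq_mul, RingHom.id_apply]
        ring }

theorem prodVecUpdateCLM_apply (a : (j : Fin n) → EuclideanSpace ℂ (Fin (d j))) (j : Fin n)
    (v : EuclideanSpace ℂ (Fin (d j))) : prodVecUpdateCLM a j v = prodVec (update a j v) :=
  rfl

end ProductVectors

theorem forward_iteration_general {N : ℕ} {d : Fin (N + 1) → ℕ}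
    (L : EuclideanSpace ℂ ((j : Fin (N + 1)) → Fin (d j)) →L[ℂ]
        EuclideanSpace ℂ ((j : Fin (N + 1)) → Fin (d j)))
    (hLsa : IsSelfAdjoint L)
    (a : (j : Fin (N + 1)) → EuclideanSpace ℂ (Fin (d j)))
    (ha : ∀ j, ‖a j‖ = 1)
    (hmax : ∀ b : (j : Fin (N + 1)) → EuclideanSpace ℂ (Fin (d j)),
      (∀ j, ‖b j‖ = 1) →
      (⟪prodVec b, L (prodVec b)⟫).re ≤ (⟪prodVec a, L (prodVec a)⟫).re)
    (Ψ : EuclideanSpace ℂ ((j : Fin (N + 1)) → Fin (d j)))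
    (hΨ : Ψ = L (prodVec a))
    (g : ℝ)
    (hg : g = (⟪prodVec a, L (prodVec a)⟫).re) :
    g ^ 2 = ∑ k : Fin (d (Fin.last N)),
      ‖⟪prodVec (Function.update a (Fin.last N) (EuclideanSpace.single k 1)), Ψ⟫‖ ^ 2 := by
  set T := prodVecUpdateCLM a (Fin.last N)
  have hTa : T (a (Fin.last N)) = prodVec a := by rw [prodVecUpdateCLM_apply, update_eq_self]
  have heig : (T†) Ψ = (g : ℂ) • a (Fin.last N) := by
    rw [hΨ, hg, ← hTa]
    refine adjoint_apply_apply_eq_smul_of_isMaxOn_unit_sphere T hLsa (ha _) fun y hy => ?_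
    rw [prodVecUpdateCLM_apply, prodVecUpdateCLM_apply, update_eq_self]
    exact hmax _ ((forall_update_iff a fun j b => ‖b‖ = 1).2 ⟨hy, fun j _ => ha j⟩)
  calc g ^ 2 = ‖(T†) Ψ‖ ^ 2 := by
        rw [heig, norm_smul, ha, mul_one, Complex.norm_real, Real.norm_eq_abs, sq_abs]
    _ = _ := by
        rw [EuclideanSpace.norm_sq_eq]
        refine Finset.sum_congr rfl fun k _ => ?_
        rw [← prodVecUpdateCLM_apply, ← adjoint_inner_right, EuclideanSpace.inner_single_left,
          map_one, one_mul]

/-- **Theorem 1 (Forward iteration).**  If the family of unit vectors `a` maximizes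
`⟨P(b), L P(b)⟩` over all families of unit vectors for a positive operator `L` on the
`(N+1)`-partite space (so the number of parties is at least one), and `Ψ = L P(a)`,
`g = ⟨P(a), L P(a)⟩`, then `g² = Σ_k |⟨P(a)[last ↦ e_k], Ψ⟩|²`, i.e.
`g = √⟨P(a₀,…,a_{N-1}), L' P(a₀,…,a_{N-1})⟩` with `L'` the partial trace of `|Ψ⟩⟨Ψ|`
over the last subsystem. -/
theorem forward_iteration {N : ℕ} {d : Fin (N + 1) → ℕ} (hd : ∀ j, 1 ≤ d j)
    (L : EuclideanSpace ℂ ((j : Fin (N + 1)) → Fin (d j)) →L[ℂ]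
        EuclideanSpace ℂ ((j : Fin (N + 1)) → Fin (d j)))
    (hLsa : IsSelfAdjoint L)
    (hLpos : ∀ x : EuclideanSpace ℂ ((j : Fin (N + 1)) → Fin (d j)),
      x ≠ 0 → 0 < (⟪x, L x⟫).re)
    (a : (j : Fin (N + 1)) → EuclideanSpace ℂ (Fin (d j)))
    (ha : ∀ j, ‖a j‖ = 1)
    (hmax : ∀ b : (j : Fin (N + 1)) → EuclideanSpace ℂ (Fin (d j)),
      (∀ j, ‖b j‖ = 1) →
      (⟪prodVec b, L (prodVec b)⟫).re ≤ (⟪prodVec a, L (prodVec a)⟫).re)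
    (Ψ : EuclideanSpace ℂ ((j : Fin (N + 1)) → Fin (d j)))
    (hΨ : Ψ = L (prodVec a))
    (g : ℝ)
    (hg : g = (⟪prodVec a, L (prodVec a)⟫).re) :
    g ^ 2 = ∑ k : Fin (d (Fin.last N)),
      ‖⟪prodVec (Function.update a (Fin.last N) (EuclideanSpace.single k 1)), Ψ⟫‖ ^ 2 :=
  forward_iteration_general L hLsa a ha hmax Ψ hΨ g hg
end

section
/- Let N ≥ 1 and let L be a positive operator on the N-partite Hilbert space H. Let a and a' be families of unit vectors such that the product vector P(a') attains the maximum of |⟨P(b), L P(a)⟩| over all families b of unit vectors, with the global phase chosen so that ⟨P(a'), L P(a)⟩ is a nonnegative real number. Then ⟨P(a), L P(a)⟩ ≤ ⟨P(a'), L P(a)⟩ ≤ ⟨P(a'), L P(a')⟩. Moreover, equality holds throughout if and only if P(a') = P(a). (Theorem 3, Monotony.) -/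
open scoped ComplexInnerProductSpace

/-! Write `x = P(a)` and `y = P(a')`. Positivity of `L` gives `re ⟪y - x, L (y - x)⟫ ≥ 0`, i.e.
`2 re ⟪y, L x⟫ ≤ ⟪y, L y⟫ + ⟪x, L x⟫`, with equality only for `y = x`. Maximality of `y`, tested
against the competitor `b = a`, gives `⟪x, L x⟫ ≤ |⟪y, L x⟫| = ⟪y, L x⟫`, and the previous
inequality turns this into `⟪y, L x⟫ ≤ ⟪y, L y⟫`. -/

namespace LinearMap

open RCLike ComplexConjugate
open scoped InnerProductSpace

variable {𝕜 E : Type*} [RCLike 𝕜] [NormedAddCommGroup E] [InnerProductSpace 𝕜 E]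
  {T : E →ₗ[𝕜] E}

theorem IsSymmetric.re_inner_sub_map_sub (hT : T.IsSymmetric) (x y : E) :
    re ⟪y - x, T (y - x)⟫_𝕜 = re ⟪y, T y⟫_𝕜 - 2 * re ⟪y, T x⟫_𝕜 + re ⟪x, T x⟫_𝕜 := by
  have hconj : ⟪x, T y⟫_𝕜 = conj ⟪y, T x⟫_𝕜 := by rw [← hT x y, inner_conj_symm]
  rw [map_sub, inner_sub_left, inner_sub_right, inner_sub_right, hconj]
  simp only [map_sub, conj_re]
  ring

theorem isPositive_of_re_inner_pos (hT : T.IsSymmetric) (hpos : ∀ z ≠ 0, 0 < re ⟪z, T z⟫_𝕜) :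
    T.IsPositive := by
  refine ⟨hT, fun z => ?_⟩
  rw [hT z z]
  rcases eq_or_ne z 0 with rfl | hz
  · simp
  · exact (hpos z hz).le

theorem IsPositive.two_mul_re_inner_map_le (hT : T.IsPositive) (x y : E) :
    2 * re ⟪y, T x⟫_𝕜 ≤ re ⟪y, T y⟫_𝕜 + re ⟪x, T x⟫_𝕜 := by
  have := hT.re_inner_nonneg_right (y - x)
  rw [hT.isSymmetric.re_inner_sub_map_sub] at this
  linarith

theorem IsSymmetric.eq_of_two_mul_re_inner_map_eq (hT : T.IsSymmetric)
    (hpos : ∀ z ≠ 0, 0 < re ⟪z, T z⟫_𝕜) {x y : E}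
    (h : 2 * re ⟪y, T x⟫_𝕜 = re ⟪y, T y⟫_𝕜 + re ⟪x, T x⟫_𝕜) : y = x := by
  by_contra hne
  have := hpos (y - x) (sub_ne_zero.mpr hne)
  rw [hT.re_inner_sub_map_sub] at this
  linarith

end LinearMap

theorem monotony_general {N : ℕ} {d : Fin (N + 1) → ℕ}
    (L : EuclideanSpace ℂ ((j : Fin (N + 1)) → Fin (d j)) →L[ℂ]
        EuclideanSpace ℂ ((j : Fin (N + 1)) → Fin (d j)))
    (hLsa : IsSelfAdjoint L)
    (hLpos : ∀ x : EuclideanSpace ℂ ((j : Fin (N + 1)) → Fin (d j)),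
      x ≠ 0 → 0 < (⟪x, L x⟫).re)
    (a a' : (j : Fin (N + 1)) → EuclideanSpace ℂ (Fin (d j)))
    (ha : ∀ j, ‖a j‖ = 1)
    (hmax : ∀ b : (j : Fin (N + 1)) → EuclideanSpace ℂ (Fin (d j)),
      (∀ j, ‖b j‖ = 1) →
      ‖⟪prodVec b, L (prodVec a)⟫‖ ≤ ‖⟪prodVec a', L (prodVec a)⟫‖)
    (hphase : (⟪prodVec a', L (prodVec a)⟫).im = 0 ∧ 0 ≤ (⟪prodVec a', L (prodVec a)⟫).re) :
    (⟪prodVec a, L (prodVec a)⟫).re ≤ (⟪prodVec a', L (prodVec a)⟫).re ∧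
    (⟪prodVec a', L (prodVec a)⟫).re ≤ (⟪prodVec a', L (prodVec a')⟫).re ∧
    ((⟪prodVec a, L (prodVec a)⟫).re = (⟪prodVec a', L (prodVec a')⟫).re ↔
      prodVec a' = prodVec a) := by
  set x := prodVec a
  set y := prodVec a'
  have hT := hLsa.isSymmetric
  have hxy : (⟪x, L x⟫).re ≤ (⟪y, L x⟫).re :=
    calc (⟪x, L x⟫).re ≤ ‖⟪x, L x⟫‖ := Complex.re_le_norm _
      _ ≤ ‖⟪y, L x⟫‖ := hmax a ha
      _ = (⟪y, L x⟫).re :=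
        (Complex.re_eq_norm.mpr (Complex.nonneg_iff.mpr ⟨hphase.2, hphase.1.symm⟩)).symm
  have hmid : 2 * (⟪y, L x⟫).re ≤ (⟪y, L y⟫).re + (⟪x, L x⟫).re :=
    (LinearMap.isPositive_of_re_inner_pos hT hLpos).two_mul_re_inner_map_le x y
  refine ⟨hxy, by linarith, fun h => hT.eq_of_two_mul_re_inner_map_eq hLpos ?_, fun h => by rw [h]⟩
  show 2 * (⟪y, L x⟫).re = (⟪y, L y⟫).re + (⟪x, L x⟫).re
  linarith

/-- **Theorem 3 (Monotony).**  Let `L` be a positive operator on the `(N+1)`-partite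
space, and let `a`, `a'` be families of unit vectors such that `P(a')` attains the
maximum of `|⟨P(b), L P(a)⟩|` over families of unit vectors `b`, with the global phase
chosen so that `⟨P(a'), L P(a)⟩` is a nonnegative real.  Then
`⟨P(a), L P(a)⟩ ≤ ⟨P(a'), L P(a)⟩ ≤ ⟨P(a'), L P(a')⟩`, with equality throughout iff
`P(a') = P(a)`. -/
theorem monotony {N : ℕ} {d : Fin (N + 1) → ℕ}
    (L : EuclideanSpace ℂ ((j : Fin (N + 1)) → Fin (d j)) →L[ℂ]
        EuclideanSpace ℂ ((j : Fin (N + 1)) → Fin (d j)))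
    (hLsa : IsSelfAdjoint L)
    (hLpos : ∀ x : EuclideanSpace ℂ ((j : Fin (N + 1)) → Fin (d j)),
      x ≠ 0 → 0 < (⟪x, L x⟫).re)
    (a a' : (j : Fin (N + 1)) → EuclideanSpace ℂ (Fin (d j)))
    (ha : ∀ j, ‖a j‖ = 1) (ha' : ∀ j, ‖a' j‖ = 1)
    (hmax : ∀ b : (j : Fin (N + 1)) → EuclideanSpace ℂ (Fin (d j)),
      (∀ j, ‖b j‖ = 1) →
      ‖⟪prodVec b, L (prodVec a)⟫‖ ≤ ‖⟪prodVec a', L (prodVec a)⟫‖)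
    (hphase : (⟪prodVec a', L (prodVec a)⟫).im = 0 ∧ 0 ≤ (⟪prodVec a', L (prodVec a)⟫).re) :
    (⟪prodVec a, L (prodVec a)⟫).re ≤ (⟪prodVec a', L (prodVec a)⟫).re ∧
    (⟪prodVec a', L (prodVec a)⟫).re ≤ (⟪prodVec a', L (prodVec a')⟫).re ∧
    ((⟪prodVec a, L (prodVec a)⟫).re = (⟪prodVec a', L (prodVec a')⟫).re ↔
      prodVec a' = prodVec a) :=
  monotony_general L hLsa hLpos a a' ha hmax hphase
end

section
/- Let N ≥ 1 and let L be a positive operator on the N-partite Hilbert space H. Let (v_s)_{s ∈ ℕ} be a sequence of unit product vectors such that for every s, v_{s+1} attains the maximum of |⟨w, L v_s⟩| over all unit product vectors w, with phase chosen so that ⟨v_{s+1}, L v_s⟩ ≥ 0. Then the sequence g_s = ⟨v_s, L v_s⟩ of real expectation values is monotone nondecreasing and converges to a limit ḡ satisfying 0 ≤ ḡ ≤ g_max(L), where g_max(L) is the supremum of ⟨w, L w⟩ over all unit product vectors w. (Theorem 4, Local convergence of the separability power iteration.) -/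
open scoped ComplexInnerProductSpace

/-- A unit product vector: `v = P(a)` with every `a j` a unit vector. -/
def IsUnitProd {N : ℕ} {d : Fin N → ℕ}
    (v : EuclideanSpace ℂ ((j : Fin N) → Fin (d j))) : Prop :=
  ∃ a : (j : Fin N) → EuclideanSpace ℂ (Fin (d j)), (∀ j, ‖a j‖ = 1) ∧ v = prodVec a

/-!
Write `g_s = ⟪v_s, L v_s⟫` and `c_s = ⟪v_{s+1}, L v_s⟫`. Testing the maximality of `v_{s+1}` against
`w = v_s` and using the phase condition gives `g_s ≤ c_s`, while Cauchy–Schwarz for the positive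
form `(x, y) ↦ re ⟪x, L y⟫` gives `c_s² ≤ g_s g_{s+1}`; hence `g_s ≤ g_{s+1}`. Unit product vectors
are unit vectors, so `g_s ≤ ‖L‖`, and the monotone sequence converges to its supremum, which lies
between `g_0 ≥ 0` and `g_max(L)`.
-/

open RCLike
open scoped InnerProductSpace

theorem norm_prodVec {N : ℕ} {d : Fin N → ℕ} (a : (j : Fin N) → EuclideanSpace ℂ (Fin (d j))) :
    ‖prodVec a‖ = ∏ j, ‖a j‖ := by
  refine (sq_eq_sq₀ (norm_nonneg _) (by positivity)).1 ?_
  rw [EuclideanSpace.norm_sq_eq, ← Finset.prod_pow]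
  simp only [EuclideanSpace.norm_sq_eq, Fintype.prod_sum, prodVec, norm_prod, Finset.prod_pow]

theorem IsUnitProd.norm_eq_one {N : ℕ} {d : Fin N → ℕ}
    {v : EuclideanSpace ℂ ((j : Fin N) → Fin (d j))} (hv : IsUnitProd v) : ‖v‖ = 1 := by
  obtain ⟨a, ha, rfl⟩ := hv
  simp [norm_prodVec, ha]

namespace ContinuousLinearMap

variable {𝕜 E : Type*} [RCLike 𝕜] [NormedAddCommGroup E] [InnerProductSpace 𝕜 E]

theorem isPositive_of_re_inner_map_self_pos [CompleteSpace E] {T : E →L[𝕜] E}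
    (hT : IsSelfAdjoint T) (hpos : ∀ x, x ≠ 0 → 0 < re ⟪x, T x⟫_𝕜) : T.IsPositive := by
  refine isPositive_def'.2 ⟨hT, fun x => ?_⟩
  rw [reApplyInnerSelf, inner_re_symm]
  rcases eq_or_ne x 0 with rfl | hx
  · simp
  · exact (hpos x hx).le

theorem re_inner_map_self_le_opNorm (T : E →L[𝕜] E) {x : E} (hx : ‖x‖ = 1) :
    re ⟪x, T x⟫_𝕜 ≤ ‖T‖ :=
  calc re ⟪x, T x⟫_𝕜 ≤ ‖x‖ * ‖T x‖ := (re_le_norm _).trans (norm_inner_le_norm _ _)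
    _ ≤ ‖x‖ * (‖T‖ * ‖x‖) := by gcongr; exact T.le_opNorm x
    _ = ‖T‖ := by rw [hx, one_mul, mul_one]

theorem IsPositive.re_inner_map_sq_le {T : E →L[𝕜] E} (hT : T.IsPositive) (x y : E) :
    re ⟪x, T y⟫_𝕜 ^ 2 ≤ re ⟪x, T x⟫_𝕜 * re ⟪y, T y⟫_𝕜 := by
  have hsymm : re ⟪y, T x⟫_𝕜 = re ⟪x, T y⟫_𝕜 := by
    rw [← hT.inner_left_eq_inner_right, inner_re_symm]
  have hquad : ∀ t : ℝ,
      0 ≤ re ⟪y, T y⟫_𝕜 * (t * t) + (-2 * re ⟪x, T y⟫_𝕜) * t + re ⟪x, T x⟫_𝕜 := by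
    intro t
    have := hT.re_inner_nonneg_right (x - (t : 𝕜) • y)
    simp only [map_sub, map_smul, inner_sub_left, inner_sub_right, inner_smul_left,
      inner_smul_right, conj_ofReal, re_ofReal_mul, hsymm] at this
    linarith
  have := discrim_le_zero hquad
  rw [discrim] at this
  linarith

theorem IsPositive.re_inner_map_self_le_of_le {T : E →L[𝕜] E} (hT : T.IsPositive) {x y : E}
    (h : re ⟪y, T y⟫_𝕜 ≤ re ⟪x, T y⟫_𝕜) : re ⟪y, T y⟫_𝕜 ≤ re ⟪x, T x⟫_𝕜 := by
  have hy := hT.re_inner_nonneg_right y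
  have hx := hT.re_inner_nonneg_right x
  nlinarith [hT.re_inner_map_sq_le x y]

end ContinuousLinearMap

/-- **Theorem 4 (Local convergence of the separability power iteration).**
Let `L` be a positive operator on the `(N+1)`-partite space, and `(v_s)` a sequence
of unit product vectors such that `v_{s+1}` maximizes `|⟨w, L v_s⟩|` over unit product
vectors `w`, with phase chosen so that `⟨v_{s+1}, L v_s⟩ ≥ 0`.  Then the sequence of
expectation values `g_s = ⟨v_s, L v_s⟩` is monotone nondecreasing and converges to a
limit `ḡ` with `0 ≤ ḡ ≤ g_max(L)`. -/
theorem local_convergence {N : ℕ} {d : Fin (N + 1) → ℕ}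
    (L : EuclideanSpace ℂ ((j : Fin (N + 1)) → Fin (d j)) →L[ℂ]
        EuclideanSpace ℂ ((j : Fin (N + 1)) → Fin (d j)))
    (hLsa : IsSelfAdjoint L)
    (hLpos : ∀ x : EuclideanSpace ℂ ((j : Fin (N + 1)) → Fin (d j)),
      x ≠ 0 → 0 < (⟪x, L x⟫).re)
    (v : ℕ → EuclideanSpace ℂ ((j : Fin (N + 1)) → Fin (d j)))
    (hv : ∀ s, IsUnitProd (v s))
    (hmax : ∀ s, ∀ w : EuclideanSpace ℂ ((j : Fin (N + 1)) → Fin (d j)),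
      IsUnitProd w → ‖⟪w, L (v s)⟫‖ ≤ ‖⟪v (s + 1), L (v s)⟫‖)
    (hphase : ∀ s, (⟪v (s + 1), L (v s)⟫).im = 0 ∧ 0 ≤ (⟪v (s + 1), L (v s)⟫).re) :
    Monotone (fun s => (⟪v s, L (v s)⟫).re) ∧
    ∃ gbar : ℝ,
      Filter.Tendsto (fun s => (⟪v s, L (v s)⟫).re) Filter.atTop (nhds gbar) ∧
      0 ≤ gbar ∧
      gbar ≤ sSup {r : ℝ | ∃ w, IsUnitProd w ∧ r = (⟪w, L w⟫).re} := by
  have hL : L.IsPositive := L.isPositive_of_re_inner_map_self_pos hLsa hLpos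
  set g : ℕ → ℝ := fun s => (⟪v s, L (v s)⟫).re
  have hmono : Monotone g := monotone_nat_of_le_succ fun s =>
    hL.re_inner_map_self_le_of_le <| calc
      g s ≤ ‖⟪v s, L (v s)⟫‖ := Complex.re_le_norm _
      _ ≤ ‖⟪v (s + 1), L (v s)⟫‖ := hmax s _ (hv s)
      _ = (⟪v (s + 1), L (v s)⟫).re :=
        (Complex.re_eq_norm.2 (Complex.nonneg_iff.2 ⟨(hphase s).2, (hphase s).1.symm⟩)).symm
  have hS : BddAbove {r : ℝ | ∃ w, IsUnitProd w ∧ r = (⟪w, L w⟫).re} := by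
    refine ⟨‖L‖, ?_⟩
    rintro r ⟨w, hw, rfl⟩
    exact L.re_inner_map_self_le_opNorm hw.norm_eq_one
  have hg_le : ∀ s, g s ≤ sSup {r : ℝ | ∃ w, IsUnitProd w ∧ r = (⟪w, L w⟫).re} :=
    fun s => le_csSup hS ⟨v s, hv s, rfl⟩
  have hg : BddAbove (Set.range g) := ⟨_, Set.forall_mem_range.2 hg_le⟩
  exact ⟨hmono, ⨆ s, g s, tendsto_atTop_ciSup hmono hg,
    (hL.re_inner_nonneg_right (v 0)).trans (le_ciSup hg 0), ciSup_le hg_le⟩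
end

section
/- Let a₁, a₂ ∈ EuclideanSpace ℂ (Fin d) be unit vectors with γ = ⟨a₁, a₂⟩ satisfying 0 < |γ| < 1. Set Γ = √(9 − 8|γ|²) and ν = √(2Γ(Γ − 3 + 4|γ|²)), and define a₁' = ν⁻¹ • (4|γ| • a₁ + (Γ − 3)(conj(γ)/|γ|) • a₂) and a₂' = ν⁻¹ • (4|γ| • a₂ + (Γ − 3)(γ/|γ|) • a₁). Then: (i) ν is a positive real number; (ii) a₁' and a₂' are unit vectors; (iii) ⟨a₁', a₂'⟩ = γ/Γ, and hence |⟨a₁', a₂'⟩|² = |γ|²/(9 − 8|γ|²) < |γ|² = |⟨a₁, a₂⟩|². (One cycle of the separability power iteration for the operator 2·1 − V strictly decreases the overlap of the subsystem states.) -/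
/-!
Write `u = γ / |γ|` for the phase of `γ`, `r = 4|γ|` and `s = Γ - 3`. Because `conj u * γ = |γ|`,
the unnormalised vectors `b₁ = r a₁ + s ū a₂` and `b₂ = r a₂ + s u a₁` satisfy
`‖bᵢ‖² = r² + s² + 2rs|γ|` and `⟪b₁, b₂⟫ = γ (r² + s² + 2rs/|γ|)`. Substituting
`Γ² = 9 - 8|γ|²`, the first quantity is `ν²` and the second is `γ ν² / Γ`. The radicand of `ν`
is positive since `(Γ - 3 + 4|γ|²)(Γ + 3 - 4|γ|²) = 16|γ|²(1 - |γ|²)` and `Γ > 1`.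
-/

open scoped ComplexInnerProductSpace

open ComplexConjugate

section PhaseCombination

variable {E : Type*} [NormedAddCommGroup E] [InnerProductSpace ℂ E] {a₁ a₂ : E}

theorem norm_smul_add_conj_phase_smul_sq (ha₁ : ‖a₁‖ = 1) (ha₂ : ‖a₂‖ = 1)
    (hγ : ⟪a₁, a₂⟫ ≠ 0) (r s : ℝ) :
    ‖(r : ℂ) • a₁ + ((s : ℂ) * (conj ⟪a₁, a₂⟫ / ‖⟪a₁, a₂⟫‖)) • a₂‖ ^ 2 =
      r ^ 2 + s ^ 2 + 2 * r * s * ‖⟪a₁, a₂⟫‖ := by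
  set γ := ⟪a₁, a₂⟫
  have hγn : ‖γ‖ ≠ 0 := norm_ne_zero_iff.mpr hγ
  have hcross : conj (r : ℂ) * ((s : ℂ) * (conj γ / ‖γ‖) * γ) = ((r * s * ‖γ‖ : ℝ) : ℂ) := by
    rw [Complex.conj_ofReal, mul_assoc (s : ℂ), div_mul_eq_mul_div, Complex.conj_mul']
    push_cast
    field_simp
  have hcoeff : ‖(s : ℂ) * (conj γ / ‖γ‖)‖ = |s| := by
    rw [norm_mul, norm_div, RCLike.norm_conj, Complex.norm_real, Complex.norm_real, norm_norm,
      div_self hγn, mul_one, Real.norm_eq_abs]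
  rw [@norm_add_sq ℂ, inner_smul_left, inner_smul_right, norm_smul, norm_smul, ha₁, ha₂, hcross,
    hcoeff, Complex.norm_real, Real.norm_eq_abs]
  simp only [RCLike.re_to_complex, Complex.ofReal_re, mul_one, sq_abs]
  ring

theorem inner_smul_add_conj_phase_smul_smul_add_phase_smul (ha₁ : ‖a₁‖ = 1) (ha₂ : ‖a₂‖ = 1)
    (r s : ℝ) :
    ⟪(r : ℂ) • a₁ + ((s : ℂ) * (conj ⟪a₁, a₂⟫ / ‖⟪a₁, a₂⟫‖)) • a₂,
      (r : ℂ) • a₂ + ((s : ℂ) * (⟪a₁, a₂⟫ / ‖⟪a₁, a₂⟫‖)) • a₁⟫ =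
      ⟪a₁, a₂⟫ * (r ^ 2 + s ^ 2 + 2 * r * s / ‖⟪a₁, a₂⟫‖) := by
  have h₁₁ : ⟪a₁, a₁⟫ = 1 := by simp [ha₁]
  have h₂₂ : ⟪a₂, a₂⟫ = 1 := by simp [ha₂]
  have h₂₁ : ⟪a₂, a₁⟫ = conj ⟪a₁, a₂⟫ := (inner_conj_symm a₂ a₁).symm
  simp only [inner_add_left, inner_add_right, inner_smul_left, inner_smul_right, h₁₁, h₂₂, h₂₁,
    map_mul, map_div₀, Complex.conj_ofReal, Complex.conj_conj]
  generalize ⟪a₁, a₂⟫ = γ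
  rcases eq_or_ne γ 0 with hγ | hγ
  · simp [hγ]
  have hγn : (‖γ‖ : ℂ) ≠ 0 := by exact_mod_cast norm_ne_zero_iff.mpr hγ
  field_simp
  linear_combination (s : ℂ) ^ 2 * Complex.conj_mul' γ

theorem norm_ofReal_inv_smul_of_norm_sq {b : E} {ν : ℝ} (hν : 0 < ν) (hb : ‖b‖ ^ 2 = ν ^ 2) :
    ‖(ν : ℂ)⁻¹ • b‖ = 1 := by
  rw [norm_smul, norm_inv, Complex.norm_real, Real.norm_of_nonneg hν.le,
    (pow_left_inj₀ (norm_nonneg b) hν.le two_ne_zero).mp hb, inv_mul_cancel₀ hν.ne']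

end PhaseCombination

theorem sub_three_add_four_mul_sq_pos {g Γ : ℝ} (hg0 : 0 < g) (hg1 : g < 1) (hΓ0 : 0 ≤ Γ)
    (hΓ : Γ ^ 2 = 9 - 8 * g ^ 2) : 0 < Γ - 3 + 4 * g ^ 2 := by
  have hprod : (Γ - 3 + 4 * g ^ 2) * (Γ + 3 - 4 * g ^ 2) = 16 * g ^ 2 * (1 - g ^ 2) := by
    linear_combination hΓ
  have hrhs : 0 < 16 * g ^ 2 * (1 - g ^ 2) := by
    have : 0 < 1 - g ^ 2 := by nlinarith
    positivity
  have hΓ1 : 1 < Γ := by nlinarith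
  nlinarith

open Complex in
theorem spi_swap_cycle_general {d : ℕ}
    (a₁ a₂ : EuclideanSpace ℂ (Fin d)) (ha₁ : ‖a₁‖ = 1) (ha₂ : ‖a₂‖ = 1)
    (γ : ℂ) (hγ : γ = ⟪a₁, a₂⟫) (hγ0 : 0 < ‖γ‖) (hγ1 : ‖γ‖ < 1)
    (Γ : ℝ) (hΓ : Γ = Real.sqrt (9 - 8 * ‖γ‖ ^ 2))
    (ν : ℝ) (hν : ν = Real.sqrt (2 * Γ * (Γ - 3 + 4 * ‖γ‖ ^ 2)))
    (a₁' a₂' : EuclideanSpace ℂ (Fin d))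
    (ha₁' : a₁' = ((ν : ℂ))⁻¹ • (((4 * ‖γ‖ : ℝ) : ℂ) • a₁ +
      (((Γ - 3 : ℝ) : ℂ) * ((starRingEnd ℂ) γ / (‖γ‖ : ℂ))) • a₂))
    (ha₂' : a₂' = ((ν : ℂ))⁻¹ • (((4 * ‖γ‖ : ℝ) : ℂ) • a₂ +
      (((Γ - 3 : ℝ) : ℂ) * (γ / (‖γ‖ : ℂ))) • a₁)) :
    0 < ν ∧
    ‖a₁'‖ = 1 ∧ ‖a₂'‖ = 1 ∧
    ⟪a₁', a₂'⟫ = γ / (Γ : ℂ) ∧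
    ‖⟪a₁', a₂'⟫‖ ^ 2 = ‖γ‖ ^ 2 / (9 - 8 * ‖γ‖ ^ 2) ∧
    ‖γ‖ ^ 2 / (9 - 8 * ‖γ‖ ^ 2) < ‖γ‖ ^ 2 ∧
    ‖γ‖ ^ 2 = ‖⟪a₁, a₂⟫‖ ^ 2 := by
  have hγne : ⟪a₁, a₂⟫ ≠ 0 := hγ ▸ norm_pos_iff.mp hγ0
  have hden : 1 < 9 - 8 * ‖γ‖ ^ 2 := by nlinarith
  have hΓsq : Γ ^ 2 = 9 - 8 * ‖γ‖ ^ 2 := by rw [hΓ, Real.sq_sqrt (by linarith)]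
  have hΓpos : 0 < Γ := hΓ ▸ Real.sqrt_pos.mpr (by linarith)
  have hradicand : 0 < 2 * Γ * (Γ - 3 + 4 * ‖γ‖ ^ 2) :=
    mul_pos (mul_pos two_pos hΓpos) (sub_three_add_four_mul_sq_pos hγ0 hγ1 hΓpos.le hΓsq)
  have hνsq : ν ^ 2 = 2 * Γ * (Γ - 3 + 4 * ‖γ‖ ^ 2) := by rw [hν, Real.sq_sqrt hradicand.le]
  have hνpos : 0 < ν := hν ▸ Real.sqrt_pos.mpr hradicand
  have hb₁ := norm_smul_add_conj_phase_smul_sq ha₁ ha₂ hγne (4 * ‖γ‖) (Γ - 3)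
  have hb₂ := norm_smul_add_conj_phase_smul_sq ha₂ ha₁ (inner_eq_zero_symm.not.mp hγne)
    (4 * ‖γ‖) (Γ - 3)
  rw [inner_conj_symm, norm_inner_symm a₂ a₁, ← hγ] at hb₂
  rw [← hγ] at hb₁
  have hinner : ⟪a₁', a₂'⟫ = γ / Γ := by
    rw [ha₁', ha₂', inner_smul_left, inner_smul_right, hγ,
      inner_smul_add_conj_phase_smul_smul_add_phase_smul ha₁ ha₂, ← hγ, Complex.conj_inv,
      Complex.conj_ofReal]
    have hνc : (ν : ℂ) ^ 2 = 2 * Γ * (Γ - 3 + 4 * (‖γ‖ : ℂ) ^ 2) := by exact_mod_cast hνsq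
    have hΓc : (Γ : ℂ) ^ 2 = 9 - 8 * (‖γ‖ : ℂ) ^ 2 := by exact_mod_cast hΓsq
    have hν0 : (ν : ℂ) ≠ 0 := by exact_mod_cast hνpos.ne'
    have hΓ0 : (Γ : ℂ) ≠ 0 := by exact_mod_cast hΓpos.ne'
    have hg0 : (‖γ‖ : ℂ) ≠ 0 := by exact_mod_cast hγ0.ne'
    push_cast
    field_simp
    linear_combination γ * Γ * hΓc - γ * hνc
  refine ⟨hνpos, ?_, ?_, hinner, ?_, div_lt_self (by positivity) hden, by rw [hγ]⟩
  · rw [ha₁']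
    refine norm_ofReal_inv_smul_of_norm_sq hνpos ?_
    linear_combination hb₁ - hνsq - hΓsq
  · rw [ha₂']
    refine norm_ofReal_inv_smul_of_norm_sq hνpos ?_
    linear_combination hb₂ - hνsq - hΓsq
  · rw [hinner, norm_div, Complex.norm_real, div_pow, Real.norm_eq_abs, sq_abs, hΓsq]

open Complex in
/-- **One cycle of the separability power iteration for `2·1 − V` strictly decreases the
overlap.**  Let `a₁, a₂` be unit vectors with `γ = ⟨a₁, a₂⟩`, `0 < |γ| < 1`,
`Γ = √(9 − 8|γ|²)`, `ν = √(2Γ(Γ − 3 + 4|γ|²))`, and let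
`a₁' = ν⁻¹ (4|γ| a₁ + (Γ−3)(γ*/|γ|) a₂)`, `a₂' = ν⁻¹ (4|γ| a₂ + (Γ−3)(γ/|γ|) a₁)`.
Then `ν > 0`, `a₁'` and `a₂'` are unit vectors, `⟨a₁', a₂'⟩ = γ/Γ`, and hence
`|⟨a₁', a₂'⟩|² = |γ|²/(9 − 8|γ|²) < |γ|² = |⟨a₁, a₂⟩|²`. -/
theorem spi_swap_cycle {d : ℕ} (hd : 2 ≤ d)
    (a₁ a₂ : EuclideanSpace ℂ (Fin d)) (ha₁ : ‖a₁‖ = 1) (ha₂ : ‖a₂‖ = 1)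
    (γ : ℂ) (hγ : γ = ⟪a₁, a₂⟫) (hγ0 : 0 < ‖γ‖) (hγ1 : ‖γ‖ < 1)
    (Γ : ℝ) (hΓ : Γ = Real.sqrt (9 - 8 * ‖γ‖ ^ 2))
    (ν : ℝ) (hν : ν = Real.sqrt (2 * Γ * (Γ - 3 + 4 * ‖γ‖ ^ 2)))
    (a₁' a₂' : EuclideanSpace ℂ (Fin d))
    (ha₁' : a₁' = ((ν : ℂ))⁻¹ • (((4 * ‖γ‖ : ℝ) : ℂ) • a₁ +
      (((Γ - 3 : ℝ) : ℂ) * ((starRingEnd ℂ) γ / (‖γ‖ : ℂ))) • a₂))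
    (ha₂' : a₂' = ((ν : ℂ))⁻¹ • (((4 * ‖γ‖ : ℝ) : ℂ) • a₂ +
      (((Γ - 3 : ℝ) : ℂ) * (γ / (‖γ‖ : ℂ))) • a₁)) :
    0 < ν ∧
    ‖a₁'‖ = 1 ∧ ‖a₂'‖ = 1 ∧
    ⟪a₁', a₂'⟫ = γ / (Γ : ℂ) ∧
    ‖⟪a₁', a₂'⟫‖ ^ 2 = ‖γ‖ ^ 2 / (9 - 8 * ‖γ‖ ^ 2) ∧
    ‖γ‖ ^ 2 / (9 - 8 * ‖γ‖ ^ 2) < ‖γ‖ ^ 2 ∧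
    ‖γ‖ ^ 2 = ‖⟪a₁, a₂⟫‖ ^ 2 :=
  spi_swap_cycle_general a₁ a₂ ha₁ ha₂ γ hγ hγ0 hγ1 Γ hΓ ν hν a₁' a₂' ha₁' ha₂'
end

section
/- Let x : ℕ → ℝ be a sequence with 0 < x 0 < 1 satisfying the recurrence x (s+1) = x s / (9 − 8 * x s) for all s. Then for all s one has 0 < x s < 1 and x s ≤ x 0 / (9 − 8 * x 0)^s, and consequently x s → 0 as s → ∞. (Geometric convergence of the squared overlap |γ⁽ˢ⁾|² under the separability power iteration for the swap-operator example.) -/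
/-- **Geometric convergence of the squared overlap under the separability power
iteration** for the swap-operator example: if `0 < x 0 < 1` and
`x (s+1) = x s / (9 − 8 x s)`, then `0 < x s < 1` and `x s ≤ x 0 / (9 − 8 x 0)^s`
for all `s`, and consequently `x s → 0`. -/
theorem overlap_geometric_convergence (x : ℕ → ℝ)
    (h0 : 0 < x 0) (h1 : x 0 < 1)
    (hrec : ∀ s, x (s + 1) = x s / (9 - 8 * x s)) :
    (∀ s, 0 < x s ∧ x s < 1) ∧
    (∀ s, x s ≤ x 0 / (9 - 8 * x 0) ^ s) ∧
    Filter.Tendsto x Filter.atTop (nhds 0) := by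
  have hd : (1 : ℝ) < 9 - 8 * x 0 := by nlinarith
  have key : ∀ s, (0 < x s ∧ x s < 1) ∧ x s ≤ x 0 / (9 - 8 * x 0) ^ s := by
    intro s
    induction s with
    | zero => exact ⟨⟨h0, h1⟩, by simp⟩
    | succ n ih =>
      obtain ⟨⟨hp, hl⟩, hb⟩ := ih
      have hden : (1 : ℝ) < 9 - 8 * x n := by nlinarith
      have hpos : 0 < x (n + 1) := by
        rw [hrec n]; positivity
      have hlt : x (n + 1) < 1 := by
        rw [hrec n]
        rw [div_lt_one (by linarith)]
        nlinarith
      have hxn0 : x n ≤ x 0 := by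
        have : (1 : ℝ) ≤ (9 - 8 * x 0) ^ n := one_le_pow₀ (le_of_lt hd)
        calc x n ≤ x 0 / (9 - 8 * x 0) ^ n := hb
          _ ≤ x 0 / 1 := by
              apply div_le_div_of_nonneg_left (le_of_lt h0) one_pos this
          _ = x 0 := by ring
      have hden2 : 9 - 8 * x 0 ≤ 9 - 8 * x n := by linarith
      refine ⟨⟨hpos, hlt⟩, ?_⟩
      rw [hrec n, pow_succ]
      calc x n / (9 - 8 * x n) ≤ x n / (9 - 8 * x 0) := by
            apply div_le_div_of_nonneg_left (le_of_lt hp) (by linarith) hden2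
        _ ≤ (x 0 / (9 - 8 * x 0) ^ n) / (9 - 8 * x 0) := by
            apply div_le_div_of_nonneg_right hb (by linarith)
        _ = x 0 / ((9 - 8 * x 0) ^ n * (9 - 8 * x 0)) := by
            rw [div_div]
  refine ⟨fun s => (key s).1, fun s => (key s).2, ?_⟩
  have htend : Filter.Tendsto (fun s => x 0 / (9 - 8 * x 0) ^ s) Filter.atTop (nhds 0) := by
    have : Filter.Tendsto (fun s : ℕ => (9 - 8 * x 0) ^ s) Filter.atTop Filter.atTop :=
      tendsto_pow_atTop_atTop_of_one_lt hd
    simpa using Filter.Tendsto.div_atTop tendsto_const_nhds this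
  exact squeeze_zero (fun s => (key s).1.1.le) (fun s => (key s).2) htend
end

section
/- Let Ŝ be the four-qubit Smolin operator on H = EuclideanSpace ℂ ((j : Fin 4) → Fin 2), i.e., Ŝ = (1/16)(id + X⊗X⊗X⊗X + Y⊗Y⊗Y⊗Y + Z⊗Z⊗Z⊗Z), where X, Y, Z are the Pauli matrices acting on each qubit factor. Then for every family of unit vectors a₀, a₁, a₂, a₃ ∈ EuclideanSpace ℂ (Fin 2), the expectation value of Ŝ at the product vector P(a) satisfies ⟨P(a), Ŝ P(a)⟩ ≤ 1/8, and this bound is attained (e.g., for a₀ = a₁ = a₂ = a₃ = e₀); hence the maximal separability eigenvalue of Ŝ for the fully separable partition is g_max(Ŝ) = 1/8. -/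
/-!
Each qubit factor `u` enters only through its Bloch vector `(⟪u, X u⟫, ⟪u, Y u⟫, ⟪u, Z u⟫)`,
which is real because the Pauli matrices are Hermitian, and has length `‖u‖² = 1`. The
expectation at a product vector factorises, so `16 ⟪P(a), Ŝ P(a)⟫ = 1 + ∑ₖ ∏ⱼ rⱼₖ` for the Bloch
vectors `r₀, …, r₃`. For unit vectors `∑ₖ r₀ₖ r₁ₖ r₂ₖ r₃ₖ ≤ 1`: by AM-GM it is at most half of
`∑ₖ (r₀ₖ r₁ₖ)² + ∑ₖ (r₂ₖ r₃ₖ)²`, and each of these sums is at most `1`. At `e₀` all four Bloch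
vectors are `(0, 0, 1)`, which gives equality.
-/

open scoped ComplexInnerProductSpace

/-- The fourfold tensor power `M⊗M⊗M⊗M` of a `2×2` matrix acting on the four-qubit
space, `(M⊗⁴ v) i = Σ_{i'} (∏ j, M (i j) (i' j)) v i'`. -/
noncomputable def tensorPow4 (M : Matrix (Fin 2) (Fin 2) ℂ)
    (v : EuclideanSpace ℂ ((j : Fin 4) → Fin 2)) :
    EuclideanSpace ℂ ((j : Fin 4) → Fin 2) :=
  WithLp.toLp 2 (fun i => ∑ i' : (j : Fin 4) → Fin 2, (∏ j, M (i j) (i' j)) * v i')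

/-- The Pauli matrix `X`. -/
noncomputable def pauliX : Matrix (Fin 2) (Fin 2) ℂ := !![0, 1; 1, 0]

/-- The Pauli matrix `Y`. -/
noncomputable def pauliY : Matrix (Fin 2) (Fin 2) ℂ := !![0, -Complex.I; Complex.I, 0]

/-- The Pauli matrix `Z`. -/
noncomputable def pauliZ : Matrix (Fin 2) (Fin 2) ℂ := !![1, 0; 0, -1]

/-- The four-qubit Smolin operator
`Ŝ = (1/16)(id + X⊗X⊗X⊗X + Y⊗Y⊗Y⊗Y + Z⊗Z⊗Z⊗Z)`. -/
noncomputable def smolin (v : EuclideanSpace ℂ ((j : Fin 4) → Fin 2)) :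
    EuclideanSpace ℂ ((j : Fin 4) → Fin 2) :=
  (16 : ℂ)⁻¹ • (v + tensorPow4 pauliX v + tensorPow4 pauliY v + tensorPow4 pauliZ v)

open Finset Matrix

lemma sum_mul_sq_le_sum_sq_mul_sum_sq {ι : Type*} [Fintype ι] (x y : ι → ℝ) :
    ∑ k, (x k * y k) ^ 2 ≤ (∑ k, x k ^ 2) * ∑ k, y k ^ 2 := by
  rw [sum_mul]
  gcongr with k
  rw [mul_pow]
  gcongr
  exact single_le_sum (fun k _ => sq_nonneg (y k)) (mem_univ k)

lemma sum_prod_le_one {ι : Type*} [Fintype ι] (r : Fin 4 → ι → ℝ)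
    (hr : ∀ j, ∑ k, r j k ^ 2 = 1) : ∑ k, ∏ j, r j k ≤ 1 := by
  have h01 := sum_mul_sq_le_sum_sq_mul_sum_sq (r 0) (r 1)
  have h23 := sum_mul_sq_le_sum_sq_mul_sum_sq (r 2) (r 3)
  rw [hr, hr, one_mul] at h01 h23
  calc ∑ k, ∏ j, r j k = ∑ k, (r 0 k * r 1 k) * (r 2 k * r 3 k) := by
        simp only [Fin.prod_univ_four, mul_assoc]
    _ ≤ ∑ k, ((r 0 k * r 1 k) ^ 2 + (r 2 k * r 3 k) ^ 2) / 2 :=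
        sum_le_sum fun k _ => by linarith [two_mul_le_add_sq (r 0 k * r 1 k) (r 2 k * r 3 k)]
    _ = (∑ k, (r 0 k * r 1 k) ^ 2 + ∑ k, (r 2 k * r 3 k) ^ 2) / 2 := by
        rw [← sum_add_distrib, sum_div]
    _ ≤ 1 := by linarith

lemma inner_prodVec {N : ℕ} {d : Fin N → ℕ}
    (a b : (j : Fin N) → EuclideanSpace ℂ (Fin (d j))) :
    ⟪prodVec a, prodVec b⟫ = ∏ j, ⟪a j, b j⟫ := by
  simp only [PiLp.inner_apply, RCLike.inner_apply, prodVec, map_prod]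
  rw [Fintype.prod_sum]
  simp only [prod_mul_distrib]

lemma tensorPow4_prodVec (M : Matrix (Fin 2) (Fin 2) ℂ)
    (a : (j : Fin 4) → EuclideanSpace ℂ (Fin 2)) :
    tensorPow4 M (prodVec a) = prodVec (fun j => M.toEuclideanLin (a j)) := by
  ext i
  simp only [tensorPow4, prodVec, toLpLin_apply, PiLp.toLp_apply, mulVec, dotProduct]
  rw [Fintype.prod_sum]
  simp only [prod_mul_distrib]

noncomputable def pauli : Fin 3 → Matrix (Fin 2) (Fin 2) ℂ := ![pauliX, pauliY, pauliZ]

lemma isHermitian_pauli (k : Fin 3) : (pauli k).IsHermitian := by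
  fin_cases k <;> ext i j <;> fin_cases i <;> fin_cases j <;>
    simp [pauli, pauliX, pauliY, pauliZ]

noncomputable def blochVector (u : EuclideanSpace ℂ (Fin 2)) (k : Fin 3) : ℝ :=
  (⟪u, (pauli k).toEuclideanLin u⟫).re

lemma inner_pauli_eq_blochVector (u : EuclideanSpace ℂ (Fin 2)) (k : Fin 3) :
    ⟪u, (pauli k).toEuclideanLin u⟫ = blochVector u k :=
  ((isSymmetric_toEuclideanLin_iff.mpr (isHermitian_pauli k)).coe_re_inner_self_apply u).symm

lemma sum_blochVector_sq (u : EuclideanSpace ℂ (Fin 2)) :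
    ∑ k, blochVector u k ^ 2 = ‖u‖ ^ 4 := by
  rw [show ‖u‖ ^ 4 = (‖u‖ ^ 2) ^ 2 by ring, EuclideanSpace.norm_sq_eq]
  simp only [blochVector, pauli, pauliX, pauliY, pauliZ, toLpLin_apply, mulVec_fin_two,
    PiLp.inner_apply, RCLike.inner_apply, Fin.sum_univ_two, Fin.sum_univ_three, of_apply,
    cons_val_zero, cons_val_one, Matrix.cons_val, mul_neg, neg_mul, Complex.add_re,
    Complex.add_im, Complex.mul_re, Complex.mul_im, Complex.conj_re, Complex.conj_im,
    Complex.neg_re, Complex.neg_im, Complex.I_re, Complex.I_im, Complex.zero_re, Complex.zero_im,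
    Complex.one_re, Complex.one_im, Complex.sq_norm, Complex.normSq_apply]
  ring

lemma blochVector_single_zero : blochVector (EuclideanSpace.single 0 1) = ![0, 0, 1] := by
  ext k
  fin_cases k <;> simp [blochVector, pauli, pauliX, pauliY, pauliZ, PiLp.inner_apply,
    toLpLin_apply]

lemma inner_prodVec_smolin (a : (j : Fin 4) → EuclideanSpace ℂ (Fin 2)) :
    ⟪prodVec a, smolin (prodVec a)⟫
      = 16⁻¹ * (∏ j, ⟪a j, a j⟫ + ∑ k, ∏ j, ⟪a j, (pauli k).toEuclideanLin (a j)⟫) := by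
  simp only [smolin, inner_smul_right, inner_add_right, tensorPow4_prodVec, inner_prodVec,
    Fin.sum_univ_three, pauli, cons_val_zero, cons_val_one, Matrix.cons_val]
  ring

lemma re_inner_prodVec_smolin (a : (j : Fin 4) → EuclideanSpace ℂ (Fin 2))
    (ha : ∀ j, ‖a j‖ = 1) :
    (⟪prodVec a, smolin (prodVec a)⟫).re = (1 + ∑ k, ∏ j, blochVector (a j) k) / 16 := by
  have h : ⟪prodVec a, smolin (prodVec a)⟫ = ((1 + ∑ k, ∏ j, blochVector (a j) k) / 16 : ℝ) := by
    simp only [inner_prodVec_smolin, inner_self_eq_norm_sq_to_K, ha, inner_pauli_eq_blochVector]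
    push_cast
    ring
  rw [h, Complex.ofReal_re]

/-- **Maximal separability eigenvalue of the Smolin state for the fully separable
partition.**  For every family of unit vectors `a₀, a₁, a₂, a₃` the expectation value of
the Smolin operator at the product vector `P(a)` is at most `1/8`; the bound is attained
at `a₀ = a₁ = a₂ = a₃ = e₀`; hence `g_max(Ŝ) = 1/8`. -/
theorem smolin_gmax :
    (∀ a : (j : Fin 4) → EuclideanSpace ℂ (Fin 2), (∀ j, ‖a j‖ = 1) →
      (⟪prodVec a, smolin (prodVec a)⟫).re ≤ 1 / 8) ∧
    (⟪prodVec (fun _ : Fin 4 => EuclideanSpace.single (0 : Fin 2) (1 : ℂ)),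
        smolin (prodVec (fun _ : Fin 4 => EuclideanSpace.single (0 : Fin 2) (1 : ℂ)))⟫).re
      = 1 / 8 ∧
    sSup {r : ℝ | ∃ a : (j : Fin 4) → EuclideanSpace ℂ (Fin 2),
        (∀ j, ‖a j‖ = 1) ∧ r = (⟪prodVec a, smolin (prodVec a)⟫).re} = 1 / 8 := by
  have upper : ∀ a : (j : Fin 4) → EuclideanSpace ℂ (Fin 2), (∀ j, ‖a j‖ = 1) →
      (⟪prodVec a, smolin (prodVec a)⟫).re ≤ 1 / 8 := by
    intro a ha
    have := sum_prod_le_one (fun j => blochVector (a j)) fun j => by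
      rw [sum_blochVector_sq, ha, one_pow]
    rw [re_inner_prodVec_smolin a ha]
    linarith
  have he₀_unit : ∀ j : Fin 4,
      ‖(fun _ : Fin 4 => EuclideanSpace.single (0 : Fin 2) (1 : ℂ)) j‖ = 1 := fun _ => by simp
  have attained : (⟪prodVec (fun _ : Fin 4 => EuclideanSpace.single (0 : Fin 2) (1 : ℂ)),
      smolin (prodVec (fun _ : Fin 4 => EuclideanSpace.single (0 : Fin 2) (1 : ℂ)))⟫).re
      = 1 / 8 := by
    rw [re_inner_prodVec_smolin _ he₀_unit, blochVector_single_zero]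
    simp only [Fin.sum_univ_three, prod_const, cons_val_zero, cons_val_one, Matrix.cons_val]
    norm_num
  refine ⟨upper, attained, IsGreatest.csSup_eq ⟨⟨_, he₀_unit, attained.symm⟩, ?_⟩⟩
  rintro r ⟨a, ha, rfl⟩
  exact upper a ha
end
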